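/- arXiv:1406.2582 — 2 statements merged into one kernel-verified Lean document; each statement's English description precedes it below -/
import Mathlib

section
/- For the twice-integrated Wiener covariance k² with σ² = 1, the mixed second partial derivative ∂²k²(t,t')/∂t∂t' equals k¹(t,t') = min(t,t')³/3 + |t−t'|·min(t,t')²/2, for t, t' > 0 with t ≠ t'. -/
/-- Once-integrated Wiener covariance with `σ² = 1`. -/
noncomputable def k1 (t t' : ℝ) : ℝ := (min t t') ^ 3 / 3 + |t - t'| * (min t t') ^ 2 / 2

/-- Twice-integrated Wiener covariance with `σ² = 1`. -/
noncomputable def k2 (t t' : ℝ) : ℝ :=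
  (min t t') ^ 5 / 20 + (|t - t'| / 12) * ((t + t') * (min t t') ^ 3 - (min t t') ^ 4 / 2)

lemma inner_gt (a s : ℝ) (h : s < a) :
    deriv (fun b => k2 a b) s = a^2*s^2/4 - a*s^3/6 + s^4/24 := by
  have hev : (fun b => k2 a b) =ᶠ[nhds s]
      (fun b : ℝ => b^5/20 + (a^2*b^3 - a*b^4/2 - b^5/2)/12) := by
    filter_upwards [Iio_mem_nhds h] with b hb
    have h1 : min a b = b := min_eq_right hb.le
    have h2 : |a - b| = a - b := abs_of_nonneg (by linarith [hb.out])
    simp only [k2, h1, h2]; ring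
  rw [hev.deriv_eq]
  have h3 := hasDerivAt_pow 3 s
  have h4 := hasDerivAt_pow 4 s
  have h5 := hasDerivAt_pow 5 s
  have H := (h5.div_const 20).add
    ((((h3.const_mul (a^2)).sub ((h4.const_mul a).div_const 2)).sub (h5.div_const 2)).div_const 12)
  have H' : HasDerivAt (fun b : ℝ => b^5/20 + (a^2*b^3 - a*b^4/2 - b^5/2)/12)
      (a^2*s^2/4 - a*s^3/6 + s^4/24) s := by
    refine H.congr_deriv ?_; push_cast; ring
  exact H'.deriv

lemma inner_lt (a s : ℝ) (h : a < s) :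
    deriv (fun b => k2 a b) s = a^3*s/6 - a^4/24 := by
  have hev : (fun b => k2 a b) =ᶠ[nhds s]
      (fun b : ℝ => a^5/20 + (a^3*b^2 - a^4*b/2 - a^5/2)/12) := by
    filter_upwards [Ioi_mem_nhds h] with b hb
    have h1 : min a b = a := min_eq_left hb.out.le
    have h2 : |a - b| = b - a := by rw [abs_sub_comm]; exact abs_of_nonneg (by linarith [hb.out])
    simp only [k2, h1, h2]; ring
  rw [hev.deriv_eq]
  have h1 := hasDerivAt_id s
  have h2 := hasDerivAt_pow 2 s
  have H := (hasDerivAt_const s (a^5/20)).add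
    ((((h2.const_mul (a^3)).sub ((h1.const_mul (a^4)).div_const 2)).sub
      (hasDerivAt_const s (a^5/2))).div_const 12)
  have H' : HasDerivAt (fun b : ℝ => a^5/20 + (a^3*b^2 - a^4*b/2 - a^5/2)/12)
      (a^3*s/6 - a^4/24) s := by
    refine H.congr_deriv ?_; push_cast; ring
  exact H'.deriv

/-- The mixed second partial derivative `∂²k²/∂t∂t'` equals `k¹(t,t')`. -/
theorem k2_mixed_deriv (t t' : ℝ) (ht : 0 < t) (ht' : 0 < t') (hne : t ≠ t') :
    deriv (fun a => deriv (fun b => k2 a b) t') t = k1 t t' := by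
  rcases lt_or_gt_of_ne hne with hlt | hgt
  · -- t < t'
    have hev : (fun a => deriv (fun b => k2 a b) t') =ᶠ[nhds t]
        (fun a : ℝ => a^3*t'/6 - a^4/24) := by
      filter_upwards [Iio_mem_nhds hlt] with a ha
      exact inner_lt a t' ha.out
    rw [hev.deriv_eq]
    have h3 := hasDerivAt_pow 3 t
    have h4 := hasDerivAt_pow 4 t
    have H := ((h3.mul_const t').div_const 6).sub (h4.div_const 24)
    have H' : HasDerivAt (fun a : ℝ => a^3*t'/6 - a^4/24) (t^2*t'/2 - t^3/6) t := by
      refine H.congr_deriv ?_; push_cast; ring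
    rw [H'.deriv, k1, min_eq_left hlt.le, abs_of_nonpos (by linarith)]
    ring
  · -- t' < t
    have hev : (fun a => deriv (fun b => k2 a b) t') =ᶠ[nhds t]
        (fun a : ℝ => a^2*t'^2/4 - a*t'^3/6 + t'^4/24) := by
      filter_upwards [Ioi_mem_nhds hgt] with a ha
      exact inner_gt a t' ha.out
    rw [hev.deriv_eq]
    have h1 := hasDerivAt_id t
    have h2 := hasDerivAt_pow 2 t
    have H := (((h2.mul_const (t'^2)).div_const 4).sub ((h1.mul_const (t'^3)).div_const 6)).add
      (hasDerivAt_const t (t'^4/24))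
    have H' : HasDerivAt (fun a : ℝ => a^2*t'^2/4 - a*t'^3/6 + t'^4/24) (t*t'^2/2 - t'^3/6) t := by
      refine H.congr_deriv ?_; push_cast; ring
    rw [H'.deriv, k1, min_eq_right hgt.le, abs_of_nonneg (by linarith)]
    ring
end

section
/- In the limit t₀ → ∞, the final posterior covariance of the twice-integrated Wiener process GP after observations x(t₀)=x₀, ẋ(t₀)=y₁, ẋ(t₀+hα)=y₂ is finite at (t₀+s, t₀+s') for s, s' > hα; specifically, for 0 < hα < s' ≤ s the limit equals [s'³/12 − hα·s'²/6 + (hα)²s'/12 − (hα)³/48]·s² + [(hα)²s'²/12 − s'⁴/24]·s + s'⁵/120 − (hα)³s'²/48. -/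
open Matrix Filter Topology

/-- Partial derivative of `k2` in its second argument. -/
noncomputable def d2k2 (t t' : ℝ) : ℝ :=
  if t' < t then t' ^ 2 * (t' ^ 2 - 4 * t * t' + 6 * t ^ 2) / 24
  else -(t ^ 4) / 24 + t' * t ^ 3 / 6

/-- Gram matrix over the observations `x(t₀)`, `ẋ(t₀)`, `ẋ(t₀ + a)`. -/
noncomputable def gram (t0 a : ℝ) : Matrix (Fin 3) (Fin 3) ℝ :=
  !![k2 t0 t0, d2k2 t0 t0, d2k2 t0 (t0 + a);
     d2k2 t0 t0, k1 t0 t0, k1 t0 (t0 + a);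
     d2k2 t0 (t0 + a), k1 (t0 + a) t0, k1 (t0 + a) (t0 + a)]

/-- Final posterior covariance of the twice-integrated Wiener GP at `(t, t')`
    after the three observations `x(t₀)`, `ẋ(t₀)`, `ẋ(t₀ + a)`. -/
noncomputable def postCov2 (t0 a t t' : ℝ) : ℝ :=
  k2 t t' -
    ![k2 t t0, d2k2 t t0, d2k2 t (t0 + a)] ⬝ᵥ
      ((gram t0 a)⁻¹ *ᵥ ![k2 t0 t', d2k2 t' t0, d2k2 t' (t0 + a)])

lemma postCov2_aux (K Nn D e f : ℝ) (hD : D ≠ 0) (hf : f ≠ 0)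
    (h : (D * K - Nn) * f = D * e) : K - D⁻¹ * Nn = e / f := by
  field_simp
  linear_combination h

set_option maxHeartbeats 4000000 in
lemma postCov2_key (a s sp t0 : ℝ) (ha : 0 < a) (h1 : a < sp) (h2 : sp ≤ s) (ht : 0 < t0) :
    postCov2 t0 a (t0 + s) (t0 + sp) =
      ((-a ^ 5 * s ^ 2 / 414720 - a ^ 5 * sp ^ 2 / 414720 + a ^ 4 * s ^ 2 * sp / 103680 + a ^ 4 * s * sp ^ 2 / 103680 - a ^ 3 * s ^ 2 * sp ^ 2 / 51840 + a ^ 2 * s ^ 2 * sp ^ 3 / 103680 - a ^ 2 * s * sp ^ 4 / 207360 + a ^ 2 * sp ^ 5 / 1036800) + (-a ^ 8 / 552960 + a ^ 7 * s / 138240 + a ^ 7 * sp / 138240 - a ^ 6 * s ^ 2 / 92160 - a ^ 6 * s * sp / 34560 - a ^ 6 * sp ^ 2 / 92160 + a ^ 5 * s ^ 2 * sp / 23040 + a ^ 5 * s * sp ^ 2 / 23040 - a ^ 4 * s ^ 2 * sp ^ 2 / 15360 + a ^ 3 * s ^ 2 * sp ^ 3 / 34560 - a ^ 3 * s * sp ^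 4 / 69120 + a ^ 3 * sp ^ 5 / 345600) * t0⁻¹) / (a ^ 2 / 8640 + a ^ 3 / 2880 * t0⁻¹) := by
  have ht0 : t0 ≠ 0 := ne_of_gt ht
  have e1 : ¬ (t0 < t0) := lt_irrefl t0
  have e2 : ¬ (t0 + a < t0) := by linarith
  have e3 : t0 < t0 + s := by linarith
  have e4 : t0 + a < t0 + s := by linarith
  have e5 : t0 < t0 + sp := by linarith
  have e6 : t0 + a < t0 + sp := by linarith
  have m1 : min t0 t0 = t0 := min_self t0
  have m2 : min t0 (t0 + a) = t0 := min_eq_left (by linarith)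
  have m3 : min (t0 + a) (t0 + a) = t0 + a := min_self _
  have m4 : min (t0 + a) t0 = t0 := min_eq_right (by linarith)
  have m5 : min (t0 + s) (t0 + sp) = t0 + sp := min_eq_right (by linarith)
  have m6 : min (t0 + s) t0 = t0 := min_eq_right (by linarith)
  have m7 : min t0 (t0 + sp) = t0 := min_eq_left (by linarith)
  have ab0 : |t0 + a - (t0 + a)| = 0 := by rw [sub_self, abs_zero]
  have ab1 : |t0 - t0| = 0 := by rw [sub_self, abs_zero]
  have ab2 : |t0 - (t0 + a)| = a := by
    rw [show t0 - (t0 + a) = -a by ring, abs_neg, abs_of_pos ha]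
  have ab3 : |t0 + a - t0| = a := by
    rw [show t0 + a - t0 = a by ring, abs_of_pos ha]
  have ab4 : |t0 + s - (t0 + sp)| = s - sp := by
    rw [show t0 + s - (t0 + sp) = s - sp by ring, abs_of_nonneg (by linarith)]
  have ab5 : |t0 + s - t0| = s := by
    rw [show t0 + s - t0 = s by ring, abs_of_pos (by linarith)]
  have ab6 : |t0 - (t0 + sp)| = sp := by
    rw [show t0 - (t0 + sp) = -sp by ring, abs_neg, abs_of_pos (by linarith)]
  simp only [postCov2, _root_.gram, k2, k1, d2k2, if_neg e1, if_neg e2, if_pos e3, if_pos e4,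
    if_pos e5, if_pos e6, m1, m2, m3, m4, m5, m6, m7, ab0, ab1, ab2, ab3, ab4, ab5, ab6]
  rw [Matrix.inv_def, Ring.inverse_eq_inv, Matrix.det_fin_three, Matrix.adjugate_fin_three,
    Matrix.smul_mulVec, dotProduct_smul, smul_eq_mul]
  simp only [Matrix.mulVec, dotProduct, Fin.sum_univ_three, Matrix.cons_val',
    Matrix.cons_val_zero, Matrix.cons_val_one, Matrix.head_cons, Matrix.empty_val',
    Matrix.cons_val_fin_one, Matrix.head_fin_const, Matrix.of_apply, Matrix.cons_val_two,
    Matrix.tail_cons]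
  apply postCov2_aux
  · refine ne_of_gt ?_
    nlinarith [mul_pos (mul_pos ha ha) (pow_pos ht 9),
      mul_pos (mul_pos (mul_pos ha ha) ha) (pow_pos ht 8)]
  · exact ne_of_gt (add_pos (div_pos (pow_pos ha 2) (by norm_num))
      (mul_pos (div_pos (pow_pos ha 3) (by norm_num)) (inv_pos.mpr ht)))
  · field_simp
    ring

/-- In the limit `t₀ → ∞`, the final posterior covariance of the
    twice-integrated Wiener GP at `(t₀+s, t₀+s')` with `hα < s' ≤ s` is finite,
    with the stated explicit value. -/
theorem twiceIntegratedWiener_postCov_limit (h α s s' : ℝ) (hh : 0 < h)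
    (hα0 : 0 < α) (hα1 : α ≤ 1) (hs' : h * α < s') (hss : s' ≤ s) :
    Tendsto (fun t0 : ℝ => postCov2 t0 (h * α) (t0 + s) (t0 + s')) atTop
      (𝓝 ((s' ^ 3 / 12 - h * α * s' ^ 2 / 6 + (h * α) ^ 2 * s' / 12 - (h * α) ^ 3 / 48) * s ^ 2 +
          ((h * α) ^ 2 * s' ^ 2 / 12 - s' ^ 4 / 24) * s +
          s' ^ 5 / 120 - (h * α) ^ 3 * s' ^ 2 / 48)) := by
  have ha : 0 < h * α := mul_pos hh hα0
  have heq : (fun t0 : ℝ => ((-(h * α) ^ 5 * s ^ 2 / 414720 - (h * α) ^ 5 * s' ^ 2 / 414720 + (h * α) ^ 4 * s ^ 2 * s' / 103680 + (h * α) ^ 4 * s * s' ^ 2 / 103680 - (h * α) ^ 3 * s ^ 2 * s' ^ 2 / 51840 + (h * α) ^ 2 * s ^ 2 * s' ^ 3 / 103680 - (h * α) ^ 2 * s * s' ^ 4 / 207360 + (h * α) ^ 2 * s' ^ 5 / 1036800) + (-(h * α) ^ 8 / 552960 + (h * α) ^ 7 * s / 138240 + (h * α) ^ 7 * s' / 138240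 - (h * α) ^ 6 * s ^ 2 / 92160 - (h * α) ^ 6 * s * s' / 34560 - (h * α) ^ 6 * s' ^ 2 / 92160 + (h * α) ^ 5 * s ^ 2 * s' / 23040 + (h * α) ^ 5 * s * s' ^ 2 / 23040 - (h * α) ^ 4 * s ^ 2 * s' ^ 2 / 15360 + (h * α) ^ 3 * s ^ 2 * s' ^ 3 / 34560 - (h * α) ^ 3 * s * s' ^ 4 / 69120 + (h * α) ^ 3 * s' ^ 5 / 345600) * t0⁻¹) /
      ((h * α) ^ 2 / 8640 + (h * α) ^ 3 / 2880 * t0⁻¹)) =ᶠ[atTop]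
      (fun t0 : ℝ => postCov2 t0 (h * α) (t0 + s) (t0 + s')) := by
    filter_upwards [eventually_gt_atTop 0] with t0 ht
    exact (postCov2_key (h * α) s s' t0 ha hs' hss ht).symm
  have hden0 : (h * α) ^ 2 / 8640 + (h * α) ^ 3 / 2880 * (0:ℝ) ≠ 0 := by
    rw [mul_zero, add_zero]
    exact ne_of_gt (div_pos (pow_pos ha 2) (by norm_num))
  have hlim : Tendsto (fun t0 : ℝ => ((-(h * α) ^ 5 * s ^ 2 / 414720 - (h * α) ^ 5 * s' ^ 2 / 414720 + (h * α) ^ 4 * s ^ 2 * s' / 103680 + (h * α) ^ 4 * s * s' ^ 2 / 103680 - (h * α) ^ 3 * s ^ 2 * s' ^ 2 / 51840 + (h * α) ^ 2 * s ^ 2 * s' ^ 3 / 103680 - (h * α) ^ 2 * s * s' ^ 4 / 207360 + (h * α) ^ 2 * s' ^ 5 / 1036800) + (-(h * α) ^ 8 / 552960 + (h * α) ^ 7 * s / 138240 + (h * α) ^ 7 * s' / 138240 - (h * α) ^ 6 * s ^ 2 / 92160 - (h * α) ^ 6 * s * s' / 34560 - (h * α) ^ 6 * s' ^ 2 / 92160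 + (h * α) ^ 5 * s ^ 2 * s' / 23040 + (h * α) ^ 5 * s * s' ^ 2 / 23040 - (h * α) ^ 4 * s ^ 2 * s' ^ 2 / 15360 + (h * α) ^ 3 * s ^ 2 * s' ^ 3 / 34560 - (h * α) ^ 3 * s * s' ^ 4 / 69120 + (h * α) ^ 3 * s' ^ 5 / 345600) * t0⁻¹) /
      ((h * α) ^ 2 / 8640 + (h * α) ^ 3 / 2880 * t0⁻¹)) atTop
      (𝓝 (((-(h * α) ^ 5 * s ^ 2 / 414720 - (h * α) ^ 5 * s' ^ 2 / 414720 + (h * α) ^ 4 * s ^ 2 * s' / 103680 + (h * α) ^ 4 * s * s' ^ 2 / 103680 - (h * α) ^ 3 * s ^ 2 * s' ^ 2 / 51840 + (h * α) ^ 2 * s ^ 2 * s' ^ 3 / 103680 - (h * α) ^ 2 * s * s' ^ 4 / 207360 + (h * α) ^ 2 * s' ^ 5 / 1036800) + (-(h * α) ^ 8 / 552960 + (h * α) ^ 7 * s / 138240 + (h * α) ^ 7 * s' / 138240 - (h * α) ^ 6 * s ^ 2 / 92160 - (h * α) ^ 6 * s * s' / 34560 - (h * α) ^ 6 * s' ^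 2 / 92160 + (h * α) ^ 5 * s ^ 2 * s' / 23040 + (h * α) ^ 5 * s * s' ^ 2 / 23040 - (h * α) ^ 4 * s ^ 2 * s' ^ 2 / 15360 + (h * α) ^ 3 * s ^ 2 * s' ^ 3 / 34560 - (h * α) ^ 3 * s * s' ^ 4 / 69120 + (h * α) ^ 3 * s' ^ 5 / 345600) * (0:ℝ)) /
        ((h * α) ^ 2 / 8640 + (h * α) ^ 3 / 2880 * (0:ℝ)))) := by
    exact Tendsto.div
      (tendsto_const_nhds.add (tendsto_const_nhds.mul tendsto_inv_atTop_zero))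
      (tendsto_const_nhds.add (tendsto_const_nhds.mul tendsto_inv_atTop_zero)) hden0
  have hval : ((-(h * α) ^ 5 * s ^ 2 / 414720 - (h * α) ^ 5 * s' ^ 2 / 414720 + (h * α) ^ 4 * s ^ 2 * s' / 103680 + (h * α) ^ 4 * s * s' ^ 2 / 103680 - (h * α) ^ 3 * s ^ 2 * s' ^ 2 / 51840 + (h * α) ^ 2 * s ^ 2 * s' ^ 3 / 103680 - (h * α) ^ 2 * s * s' ^ 4 / 207360 + (h * α) ^ 2 * s' ^ 5 / 1036800) + (-(h * α) ^ 8 / 552960 + (h * α) ^ 7 * s / 138240 + (h * α) ^ 7 * s' / 138240 - (h * α) ^ 6 * s ^ 2 / 92160 - (h * α) ^ 6 * s * s' / 34560 - (h * α) ^ 6 * s' ^ 2 / 92160 + (h * α) ^ 5 * s ^ 2 * s' / 23040 + (h * α) ^ 5 * s * s' ^ 2 / 23040 - (h * α) ^ 4 * s ^ 2 * s' ^ 2 / 15360 + (h * α) ^ 3 * s ^ 2 * s' ^ 3 / 34560 - (h * α) ^ 3 * s * s' ^ 4 / 69120 + (h * α) ^ 3 * s' ^ 5 / 345600) * (0:ℝ))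 /
      ((h * α) ^ 2 / 8640 + (h * α) ^ 3 / 2880 * (0:ℝ)) =
      (s' ^ 3 / 12 - h * α * s' ^ 2 / 6 + (h * α) ^ 2 * s' / 12 - (h * α) ^ 3 / 48) * s ^ 2 +
          ((h * α) ^ 2 * s' ^ 2 / 12 - s' ^ 4 / 24) * s +
          s' ^ 5 / 120 - (h * α) ^ 3 * s' ^ 2 / 48 := by
    rw [mul_zero, add_zero, mul_zero, add_zero,
      div_eq_iff (ne_of_gt (div_pos (pow_pos ha 2) (by norm_num : (0:ℝ) < 8640)))]
    ring
  rw [hval] at hlim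
  exact hlim.congr' heq
end
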